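/- arXiv:2509.02536 — 4 statements merged into one kernel-verified Lean document; each statement's English description precedes it below -/
import Mathlib

section
/- Let d ≥ 1, let x̃ = 0 ∈ ℝ^d and ṽ = (0', ṽ_d) ∈ ℝ^d, and let r̃, κ, a, b, c > 0 satisfy √(ac) ≥ 4b and a ≥ 4c. Define ξ = (0', ξ_d) and η = (0', η_d) by ξ_d = √(ac) r̃ / √(ac − b²) and b ξ_d = c (η_d − ṽ_d), and set X_d = x_d − ξ_d, V_d = v_d − η_d, and ρ(x,v) = √( a|κ x'|² + c|v'|² + a X_d² − 2b X_d V_d + c V_d² ). Then: (i) ξ_d ∈ [r̃, (4/3) r̃] and (ξ,η) ∉ 𝒪; (ii) ρ(x̃,ṽ) = √a · r̃ and the set {(x,v) ∈ ℝ^d×ℝ^d : ρ(x,v) < √a · r̃} is disjoint from 𝒪; (iii) on the region 𝒫 = {(x,v) : √a · r̃ ≤ ρ(x,v) ≤ 3√a · r̃} ∩ 𝒪 one has |X_d| ≥ r̃, max{κ|x'|, |X_d|} ≤ 4 r̃, and max{|v'|, |V_d|} ≤ √(12a/c) · r̃. -/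
open scoped RealInnerProductSpace
open Real

noncomputable section

/-- `ℝ^d` as a Euclidean space. -/
abbrev Ee (d : ℕ) : Type := EuclideanSpace ℝ (Fin d)

/-- Points `z = (t, x, v)` of the phase space `ℝ × ℝ^d × ℝ^d`. -/
abbrev Zz (d : ℕ) : Type := ℝ × Ee d × Ee d

/-- The kinetic cylinder `Q_r(z₀)`. -/
def Qcyl {d : ℕ} (r : ℝ) (z₀ : Zz d) : Set (Zz d) :=
  {z | z₀.1 - r ^ 2 < z.1 ∧ z.1 ≤ z₀.1 ∧
    ‖z.2.1 - z₀.2.1 - (z.1 - z₀.1) • z₀.2.2‖ < r ^ 3 ∧ ‖z.2.2 - z₀.2.2‖ < r}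

/-- The spatially restricted cylinder `G_r(z₀)` over the domain `Ω`. -/
def Gcyl {d : ℕ} (Ω : Set (Ee d)) (r : ℝ) (z₀ : Zz d) : Set (Zz d) :=
  {z ∈ Qcyl r z₀ | z.2.1 ∈ closure Ω}

/-- The incoming boundary `Σ₋` of the phase domain (with outward normal field `nrm`). -/
def SigmaMinus {d : ℕ} (Ω : Set (Ee d)) (nrm : Ee d → Ee d) : Set (Zz d) :=
  {z | z.2.1 ∈ frontier Ω ∧ inner ℝ (nrm z.2.1) z.2.2 < (0:ℝ)}

/-- The grazing boundary `Σ₀`. -/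
def SigmaZero {d : ℕ} (Ω : Set (Ee d)) (nrm : Ee d → Ee d) : Set (Zz d) :=
  {z | z.2.1 ∈ frontier Ω ∧ inner ℝ (nrm z.2.1) z.2.2 = (0:ℝ)}

/-- Quadratic form `ξ ↦ ξᵀ M ξ` of a matrix. -/
def QF {d : ℕ} (M : Matrix (Fin d) (Fin d) ℝ) (ξ : Ee d) : ℝ :=
  ∑ i, ∑ j, M i j * ξ i * ξ j

/-- Uniform ellipticity `λ I_d ≤ A ≤ Λ I_d` (with symmetry) of the diffusion matrix on `G`. -/
def UnifElliptic {d : ℕ} (lam Lam : ℝ) (A : Zz d → Matrix (Fin d) (Fin d) ℝ)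
    (G : Set (Zz d)) : Prop :=
  ∀ z ∈ G, (A z).IsSymm ∧ ∀ ξ : Ee d,
    lam * ‖ξ‖ ^ 2 ≤ QF (A z) ξ ∧ QF (A z) ξ ≤ Lam * ‖ξ‖ ^ 2

/-- Growth bound `|B(z)| ≤ Λ (1 + |v|²)` for the drift on `G`. -/
def DriftBound {d : ℕ} (Lam : ℝ) (B : Zz d → Ee d) (G : Set (Zz d)) : Prop :=
  ∀ z ∈ G, ‖B z‖ ≤ Lam * (1 + ‖z.2.2‖ ^ 2)

/-- `f` is a (classical) solution of the kinetic Fokker-Planck equation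
`∂ₜ f + v·∇ₓ f = A : D²_v f + B·∇_v f + S` on `G`:  it is continuous on `G`, and in the
interior of `G` the transport derivative `(∂ₜ + v·∇ₓ) f`, the velocity gradient and the
velocity Hessian exist, are continuous, and satisfy the equation pointwise. -/
def IsKFPSol {d : ℕ} (A : Zz d → Matrix (Fin d) (Fin d) ℝ) (B : Zz d → Ee d)
    (S : Zz d → ℝ) (f : Zz d → ℝ) (G : Set (Zz d)) : Prop :=
  ContinuousOn f G ∧
  ∃ (g : Zz d → ℝ) (Dv : Zz d → Ee d →L[ℝ] ℝ) (Hv : Zz d → Ee d →L[ℝ] Ee d →L[ℝ] ℝ),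
    ContinuousOn g (interior G) ∧ ContinuousOn Hv (interior G) ∧
    ∀ z ∈ interior G,
      HasDerivAt (fun s : ℝ => f (z.1 + s, z.2.1 + s • z.2.2, z.2.2)) (g z) 0 ∧
      HasFDerivAt (fun w => f (z.1, z.2.1, w)) (Dv z) z.2.2 ∧
      HasFDerivAt (fun w => Dv (z.1, z.2.1, w)) (Hv z) z.2.2 ∧
      g z = (∑ i, ∑ j, A z i j *
          Hv z (EuclideanSpace.single i 1) (EuclideanSpace.single j 1))
        + Dv z (B z) + S z

/-- Index type for the variables `(t, x, v)` of a kinetic polynomial. -/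
abbrev KVar (d : ℕ) := Unit ⊕ Fin d ⊕ Fin d

/-- The kinetic weights: `t` has weight 2, each `xᵢ` weight 3, each `vᵢ` weight 1. -/
def kinW (d : ℕ) : KVar d → ℕ
  | Sum.inl _ => 2
  | Sum.inr (Sum.inl _) => 3
  | Sum.inr (Sum.inr _) => 1

/-- Evaluation of a polynomial in the variables `(t, x, v)` at a phase point. -/
def evalKP {d : ℕ} (p : MvPolynomial (KVar d) ℝ) (z : Zz d) : ℝ :=
  MvPolynomial.eval (fun i => match i with
    | Sum.inl _ => z.1
    | Sum.inr (Sum.inl j) => z.2.1 j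
    | Sum.inr (Sum.inr j) => z.2.2 j) p

/-- `C` is an admissible constant for the kinetic Hölder seminorm `[f]_{C_ℓ^β(G)}`:
around every point of `G` there is a polynomial of kinetic degree `< β`
approximating `f` to order `r^β` on every kinetic cylinder of radius `r`.
In particular `[f]_{C_ℓ^β(G)} ≤ C` holds iff this predicate holds. -/
def KHolderLE {d : ℕ} (β : ℝ) (G : Set (Zz d)) (f : Zz d → ℝ) (C : ℝ) : Prop :=
  ∀ z₀ ∈ G, ∃ p : MvPolynomial (KVar d) ℝ,
    (((MvPolynomial.weightedTotalDegree (kinW d) p : ℕ) : ℝ) < β) ∧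
    ∀ r > 0, ∀ z ∈ Qcyl r z₀ ∩ G, |f z - evalKP p z| ≤ C * r ^ β

/-- `Ω` is a bounded domain whose boundary is of class `C^{m,γ}`, with (unit outward)
normal field `nrm`: it is given near the boundary as the sublevel set of a defining
function `φ` of class `C^m` whose `m`-th derivative is `γ`-Hölder, with nonvanishing
gradient on the boundary, and `nrm` is the normalized gradient of `φ` there. -/
def HasCBoundary {d : ℕ} (Ω : Set (Ee d)) (nrm : Ee d → Ee d) (m : ℕ) (γ : NNReal) : Prop :=
  IsOpen Ω ∧ Bornology.IsBounded Ω ∧ IsConnected Ω ∧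
  ∃ φ : Ee d → ℝ, ContDiff ℝ m φ ∧
    (∃ C : NNReal, HolderWith C γ (iteratedFDeriv ℝ m φ)) ∧
    (∃ U : Set (Ee d), IsOpen U ∧ frontier Ω ⊆ U ∧
      (∀ x ∈ U, (x ∈ Ω ↔ φ x < 0) ∧ (x ∈ frontier Ω ↔ φ x = 0))) ∧
    ∀ x ∈ frontier Ω, gradient φ x ≠ 0 ∧ nrm x = ‖gradient φ x‖⁻¹ • gradient φ x

/-- The Japanese bracket `⟨v⟩ = (1 + |v|²)^{1/2}`. -/
def jbr {d : ℕ} (v : Ee d) : ℝ := Real.sqrt (1 + ‖v‖ ^ 2)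

/-- The half space `ℍ^d₋ = {x : x_d ≤ 0}` (in dimension `d+1`). -/
def HalfSp (d : ℕ) : Set (Ee (d+1)) := {x | x (Fin.last d) ≤ 0}

/-- `G_r(z₀)` in the half-space setting. -/
def GcylH (d : ℕ) (r : ℝ) (z₀ : Zz (d+1)) : Set (Zz (d+1)) := Gcyl (HalfSp d) r z₀

/-- The incoming boundary `Σ₋ = (−∞,0] × {x_d = 0, v_d < 0}` in the half-space setting. -/
def SigmaMinusH (d : ℕ) : Set (Zz (d+1)) :=
  {z | z.1 ≤ 0 ∧ z.2.1 (Fin.last d) = 0 ∧ z.2.2 (Fin.last d) < 0}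

/-- The grazing boundary `Σ₀ = (−∞,0] × {x_d = 0, v_d = 0}` in the half-space setting. -/
def SigmaZeroH (d : ℕ) : Set (Zz (d+1)) :=
  {z | z.1 ≤ 0 ∧ z.2.1 (Fin.last d) = 0 ∧ z.2.2 (Fin.last d) = 0}

/-- The kinetic gauge `‖z‖ = max{|t|^{1/2}, |x|^{1/3}, |v|}`. -/
def kinGauge {d : ℕ} (z : Zz d) : ℝ :=
  max (|z.1| ^ ((1:ℝ)/2)) (max (‖z.2.1‖ ^ ((1:ℝ)/3)) ‖z.2.2‖)

/-- Squared norm of the first `d` components (all but the last) of a vector in `ℝ^{d+1}`. -/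
def pns {d : ℕ} (u : Ee (d+1)) : ℝ := ∑ i : Fin d, (u i.castSucc) ^ 2

/-- The phase domain `𝒪 = ℍ^d₋ × ℝ^d`. -/
def Oset (d : ℕ) : Set (Ee (d+1) × Ee (d+1)) := {p | p.1 (Fin.last d) ≤ 0}

/-- The quasi-distance function `ρ(x,v)` with parameters `κ, a, b, c` and center data
`ξ_d, η_d`. -/
def rhoQ (d : ℕ) (κ a b c ξd ηd : ℝ) (x v : Ee (d+1)) : ℝ :=
  Real.sqrt (a * κ ^ 2 * pns x + c * pns v
    + a * (x (Fin.last d) - ξd) ^ 2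
    - 2 * b * (x (Fin.last d) - ξd) * (v (Fin.last d) - ηd)
    + c * (v (Fin.last d) - ηd) ^ 2)

/-- The time-shifted quasi-distance function `ρ_t(x,v)`. -/
def rhoT (d : ℕ) (κ a b c ξd ηd h vtd : ℝ) (z : Zz (d+1)) : ℝ :=
  Real.sqrt (a * κ ^ 2 * pns z.2.1 + c * pns z.2.2
    + a * (z.2.1 (Fin.last d) - ξd - h * vtd * z.1) ^ 2
    - 2 * b * (z.2.1 (Fin.last d) - ξd - h * vtd * z.1) * (z.2.2 (Fin.last d) - ηd)
    + c * (z.2.2 (Fin.last d) - ηd) ^ 2)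

/-- The hypoelliptic operator `ℒ = ∂ₜ + v·∇ₓ − A : D²_v − B·∇_v` applied to a function `F`
(expressed through partial (Fréchet) derivatives of `F`). -/
def Lop {d : ℕ} (A : Zz d → Matrix (Fin d) (Fin d) ℝ) (B : Zz d → Ee d)
    (F : Zz d → ℝ) (z : Zz d) : ℝ :=
  deriv (fun s : ℝ => F (s, z.2.1, z.2.2)) z.1
    + fderiv ℝ (fun y => F (z.1, y, z.2.2)) z.2.1 z.2.2
    - (∑ i, ∑ j, A z i j *
        iteratedFDeriv ℝ 2 (fun w => F (z.1, z.2.1, w)) z.2.2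
          ![EuclideanSpace.single i 1, EuclideanSpace.single j 1])
    - fderiv ℝ (fun w => F (z.1, z.2.1, w)) z.2.2 (B z)


set_option maxHeartbeats 1000000

/-- **Quasi-distance set-up (Lemma 3.1).**  For `(x̃,ṽ) = (0,(0',ṽ_d)) ∈ Γ` and parameters
`r̃, κ, a, b, c > 0` with `√(ac) ≥ 4b` and `a ≥ 4c`, defining `ξ_d, η_d, X_d, V_d, ρ` as
stated: (i) `ξ_d ∈ [r̃, (4/3)r̃]` and `(ξ,η) ∉ 𝒪`; (ii) `ρ(x̃,ṽ) = √a·r̃` and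
`{ρ < √a·r̃} ∩ 𝒪 = ∅`; (iii) on `𝒫 = {√a·r̃ ≤ ρ ≤ 3√a·r̃} ∩ 𝒪` one has `|X_d| ≥ r̃`,
`max{κ|x'|, |X_d|} ≤ 4r̃` and `max{|v'|, |V_d|} ≤ √(12a/c)·r̃`. -/
theorem stmt_6 (d : ℕ) (vtd rt κ a b c ξd ηd : ℝ)
    (hrt : 0 < rt) (hκ : 0 < κ) (ha : 0 < a) (hb : 0 < b) (hc : 0 < c)
    (hab : 4 * b ≤ Real.sqrt (a * c)) (hac : 4 * c ≤ a)
    (hξ : ξd = Real.sqrt (a * c) * rt / Real.sqrt (a * c - b ^ 2))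
    (hη : b * ξd = c * (ηd - vtd)) :
    -- (i)
    (rt ≤ ξd ∧ ξd ≤ 4 / 3 * rt ∧
      (EuclideanSpace.single (Fin.last d) ξd, EuclideanSpace.single (Fin.last d) ηd)
        ∉ Oset d) ∧
    -- (ii)
    (rhoQ d κ a b c ξd ηd 0 (EuclideanSpace.single (Fin.last d) vtd)
        = Real.sqrt a * rt ∧
      {p : Ee (d+1) × Ee (d+1) | rhoQ d κ a b c ξd ηd p.1 p.2 < Real.sqrt a * rt}
        ∩ Oset d = ∅) ∧
    -- (iii)
    (∀ x v : Ee (d+1),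
      Real.sqrt a * rt ≤ rhoQ d κ a b c ξd ηd x v →
      rhoQ d κ a b c ξd ηd x v ≤ 3 * (Real.sqrt a * rt) →
      (x, v) ∈ Oset d →
      rt ≤ |x (Fin.last d) - ξd| ∧
      κ * Real.sqrt (pns x) ≤ 4 * rt ∧
      |x (Fin.last d) - ξd| ≤ 4 * rt ∧
      Real.sqrt (pns v) ≤ Real.sqrt (12 * a / c) * rt ∧
      |v (Fin.last d) - ηd| ≤ Real.sqrt (12 * a / c) * rt) := by

  -- preliminaries
  have hac0 : (0:ℝ) ≤ a * c := by positivity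
  have hs : Real.sqrt (a * c) ^ 2 = a * c := Real.sq_sqrt hac0
  have hb2 : 16 * b ^ 2 ≤ a * c := by
    have h1 : (4 * b) ^ 2 ≤ Real.sqrt (a * c) ^ 2 :=
      pow_le_pow_left₀ (by linarith) hab 2
    linarith [h1, hs]
  have hD : 0 < a * c - b ^ 2 := by
    have : 0 < b ^ 2 := by positivity
    linarith
  have hsD : Real.sqrt (a * c - b ^ 2) ^ 2 = a * c - b ^ 2 := Real.sq_sqrt hD.le
  have hsD0 : 0 < Real.sqrt (a * c - b ^ 2) := Real.sqrt_pos.2 hD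
  have hξ0 : 0 < ξd := by
    rw [hξ]
    have : 0 < Real.sqrt (a * c) := Real.sqrt_pos.2 (by positivity)
    positivity
  have hξsq : ξd ^ 2 * (a * c - b ^ 2) = a * c * rt ^ 2 := by
    have h2 : ξd * Real.sqrt (a * c - b ^ 2) = Real.sqrt (a * c) * rt := by
      rw [hξ]; field_simp
    linear_combination (ξd * Real.sqrt (a * c - b ^ 2) + Real.sqrt (a * c) * rt) * h2
      - ξd ^ 2 * hsD + rt ^ 2 * hs
  have hmac : 0 < a * c := mul_pos ha hc
  have hacrt : 0 ≤ a * c * rt ^ 2 := by positivity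
  have hsqr : rt ^ 2 ≤ ξd ^ 2 :=
    le_of_mul_le_mul_left
      (by linarith [hξsq, sq_nonneg (b * ξd)] : (a*c) * rt ^ 2 ≤ (a*c) * ξd ^ 2) hmac
  have hrtξ : rt ≤ ξd := by
    have := Real.sqrt_le_sqrt hsqr
    rwa [Real.sqrt_sq hrt.le, Real.sqrt_sq hξ0.le] at this
  have h16ξ : 16 * b ^ 2 * ξd ^ 2 ≤ (a * c) * ξd ^ 2 := by
    have := mul_le_mul_of_nonneg_right hb2 (sq_nonneg ξd); linarith
  have hsq2 : ξd ^ 2 ≤ (4 / 3 * rt) ^ 2 :=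
    le_of_mul_le_mul_left
      (by linarith [hξsq, h16ξ, hacrt] : (a*c) * ξd ^ 2 ≤ (a*c) * ((4 / 3 * rt) ^ 2)) hmac
  have hξ43 : ξd ≤ 4 / 3 * rt := by
    have := Real.sqrt_le_sqrt hsq2
    rwa [Real.sqrt_sq hξ0.le, Real.sqrt_sq (by positivity)] at this
  have hpns : ∀ u : Ee (d+1), 0 ≤ pns u := fun u => Finset.sum_nonneg fun i _ => sq_nonneg _
  have hpns_single : ∀ t : ℝ, pns (EuclideanSpace.single (Fin.last d) t) = 0 := by
    intro t
    simp only [pns]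
    apply Finset.sum_eq_zero
    intro i _
    rw [EuclideanSpace.single_apply, if_neg (Fin.castSucc_lt_last i).ne]
    ring
  have hpns0 : pns (0 : Ee (d+1)) = 0 := by
    simp only [pns]
    apply Finset.sum_eq_zero
    intro i _
    simp
  have hsart : Real.sqrt (a * rt ^ 2) = Real.sqrt a * rt := by
    rw [Real.sqrt_mul ha.le, Real.sqrt_sq hrt.le]
  have hQlb : ∀ x v : Ee (d+1), x (Fin.last d) ≤ 0 →
      a * rt ^ 2 ≤ a * κ ^ 2 * pns x + c * pns v
        + a * (x (Fin.last d) - ξd) ^ 2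
        - 2 * b * (x (Fin.last d) - ξd) * (v (Fin.last d) - ηd)
        + c * (v (Fin.last d) - ηd) ^ 2 := by
    intro x v hx
    have t1 : 0 ≤ a * κ ^ 2 * pns x := mul_nonneg (by positivity) (hpns x)
    have t2 : 0 ≤ c * pns v := mul_nonneg hc.le (hpns v)
    set X := x (Fin.last d) - ξd with hXdef
    set V := v (Fin.last d) - ηd with hVdef
    have hXle : X ≤ -ξd := by rw [hXdef]; linarith
    have hX2 : ξd ^ 2 ≤ X ^ 2 := by
      have hprod : 0 ≤ (-(X + ξd)) * (ξd - X) :=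
        mul_nonneg (by linarith) (by linarith)
      linarith [hprod]
    have hDX : (a * c - b ^ 2) * ξd ^ 2 ≤ (a * c - b ^ 2) * X ^ 2 :=
      mul_le_mul_of_nonneg_left hX2 hD.le
    have s4 : a * rt ^ 2 ≤ a * X ^ 2 - 2 * b * X * V + c * V ^ 2 :=
      le_of_mul_le_mul_left
        (by linarith [hDX, hξsq, sq_nonneg (c * V - b * X)] :
          c * (a * rt ^ 2) ≤ c * (a * X ^ 2 - 2 * b * X * V + c * V ^ 2)) hc
    linarith
  have hVt : c * (vtd - ηd) = -(b * ξd) := by linarith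
  have hrho0 : rhoQ d κ a b c ξd ηd 0 (EuclideanSpace.single (Fin.last d) vtd)
      = Real.sqrt a * rt := by
    unfold rhoQ
    rw [hpns0, hpns_single]
    have e3 : (0 : Ee (d+1)) (Fin.last d) = 0 := rfl
    have e4 : (EuclideanSpace.single (Fin.last d) vtd : Ee (d+1)) (Fin.last d) = vtd := by
      simp
    rw [e3, e4, ← hsart]
    congr 1
    have h2 : c * (a * κ ^ 2 * 0 + c * 0 + a * (0 - ξd) ^ 2
        - 2 * b * (0 - ξd) * (vtd - ηd) + c * (vtd - ηd) ^ 2) = c * (a * rt ^ 2) := by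
      linear_combination (c * (vtd - ηd) + b * ξd) * hVt + hξsq
    exact mul_left_cancel₀ hc.ne' h2
  have hdisj : {p : Ee (d+1) × Ee (d+1) |
      rhoQ d κ a b c ξd ηd p.1 p.2 < Real.sqrt a * rt} ∩ Oset d = ∅ := by
    rw [Set.eq_empty_iff_forall_notMem]
    rintro ⟨x, v⟩ ⟨hlt, hO⟩
    have hO' : x (Fin.last d) ≤ 0 := hO
    have h1 := hQlb x v hO'
    have h2 : Real.sqrt a * rt ≤ rhoQ d κ a b c ξd ηd x v := by
      rw [← hsart]; exact Real.sqrt_le_sqrt h1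
    simp only [Set.mem_setOf_eq] at hlt
    linarith
  refine ⟨⟨hrtξ, hξ43, ?_⟩, ⟨hrho0, hdisj⟩, ?_⟩
  · intro hmem
    have h : (EuclideanSpace.single (Fin.last d) ξd : Ee (d+1)) (Fin.last d) ≤ 0 := hmem
    simp at h
    linarith
  · intro x v hlo hhi hO
    have hx : x (Fin.last d) ≤ 0 := hO
    have hρ : rhoQ d κ a b c ξd ηd x v = Real.sqrt (a * κ ^ 2 * pns x + c * pns v
        + a * (x (Fin.last d) - ξd) ^ 2
        - 2 * b * (x (Fin.last d) - ξd) * (v (Fin.last d) - ηd)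
        + c * (v (Fin.last d) - ηd) ^ 2) := rfl
    have hQlb' := hQlb x v hx
    have hp1 : 0 ≤ pns x := hpns x
    have hp2 : 0 ≤ pns v := hpns v
    set p1 := pns x with hp1def
    set p2 := pns v with hp2def
    set X := x (Fin.last d) - ξd with hXdef
    set V := v (Fin.last d) - ηd with hVdef
    have hQ0 : (0:ℝ) ≤ a * κ ^ 2 * p1 + c * p2 + a * X ^ 2 - 2 * b * X * V + c * V ^ 2 :=
      le_trans (by positivity : (0:ℝ) ≤ a * rt ^ 2) hQlb'
    have hQub : a * κ ^ 2 * p1 + c * p2 + a * X ^ 2 - 2 * b * X * V + c * V ^ 2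
        ≤ 9 * a * rt ^ 2 := by
      have h1 : Real.sqrt (a * κ ^ 2 * p1 + c * p2 + a * X ^ 2 - 2 * b * X * V + c * V ^ 2)
          ≤ 3 * (Real.sqrt a * rt) := by rw [← hρ]; exact hhi
      have h2 : a * κ ^ 2 * p1 + c * p2 + a * X ^ 2 - 2 * b * X * V + c * V ^ 2
          = Real.sqrt (a * κ ^ 2 * p1 + c * p2 + a * X ^ 2 - 2 * b * X * V + c * V ^ 2) ^ 2 :=
        (Real.sq_sqrt hQ0).symm
      have h3 := pow_le_pow_left₀ (Real.sqrt_nonneg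
        (a * κ ^ 2 * p1 + c * p2 + a * X ^ 2 - 2 * b * X * V + c * V ^ 2)) h1 2
      have h4 : Real.sqrt a ^ 2 = a := Real.sq_sqrt ha.le
      have h5 : (3 * (Real.sqrt a * rt)) ^ 2 = 9 * a * rt ^ 2 := by
        linear_combination 9 * rt ^ 2 * h4
      linarith [h2, h3, h5]
    have t1 : 0 ≤ a * κ ^ 2 * p1 := mul_nonneg (by positivity) hp1
    have t2 : 0 ≤ c * p2 := mul_nonneg hc.le hp2
    have hBpos : 0 ≤ a * X ^ 2 - 2 * b * X * V + c * V ^ 2 :=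
      le_of_mul_le_mul_left
        (by linarith [mul_nonneg hD.le (sq_nonneg X), sq_nonneg (c * V - b * X)] :
          c * (0:ℝ) ≤ c * (a * X ^ 2 - 2 * b * X * V + c * V ^ 2)) hc
    have hB : a * X ^ 2 - 2 * b * X * V + c * V ^ 2 ≤ 9 * a * rt ^ 2 := by
      linarith [hQub, t1, t2]
    have hXle : X ≤ -ξd := by rw [hXdef]; linarith
    have hart : (0:ℝ) ≤ a * rt ^ 2 := by positivity
    have ha2rt : (0:ℝ) ≤ a * a * rt ^ 2 := by positivity
    have hacrt2 : (0:ℝ) ≤ a * c * rt ^ 2 := by positivity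
    have hfrac : (0:ℝ) ≤ 12 * a / c := by positivity
    have hr : Real.sqrt (12 * a / c) * rt = Real.sqrt (12 * a / c * rt ^ 2) := by
      rw [Real.sqrt_mul hfrac, Real.sqrt_sq hrt.le]
    refine ⟨?_, ?_, ?_, ?_, ?_⟩
    · exact le_abs.mpr (Or.inr (by linarith))
    · have h1 : κ ^ 2 * p1 ≤ (4 * rt) ^ 2 :=
        le_of_mul_le_mul_left
          (by linarith [hQub, t2, hBpos, hart] :
            a * (κ ^ 2 * p1) ≤ a * ((4 * rt) ^ 2)) ha
      calc κ * Real.sqrt p1 = Real.sqrt (κ ^ 2 * p1) := by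
            rw [Real.sqrt_mul (sq_nonneg κ), Real.sqrt_sq hκ.le]
        _ ≤ Real.sqrt ((4 * rt) ^ 2) := Real.sqrt_le_sqrt h1
        _ = 4 * rt := Real.sqrt_sq (by linarith)
    · have hcB := mul_le_mul_of_nonneg_left hB hc.le
      have hbX := mul_le_mul_of_nonneg_right hb2 (sq_nonneg X)
      have h2 : X ^ 2 ≤ (4 * rt) ^ 2 :=
        le_of_mul_le_mul_left
          (by linarith [hcB, hbX, sq_nonneg (c * V - b * X), hacrt2] :
            (a * c) * X ^ 2 ≤ (a * c) * ((4 * rt) ^ 2)) hmac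
      calc |X| = Real.sqrt (X ^ 2) := (Real.sqrt_sq_eq_abs X).symm
        _ ≤ Real.sqrt ((4 * rt) ^ 2) := Real.sqrt_le_sqrt h2
        _ = 4 * rt := Real.sqrt_sq (by linarith)
    · have h3 : p2 ≤ 12 * a / c * rt ^ 2 := by
        rw [div_mul_eq_mul_div, le_div_iff₀ hc]
        linarith [hQub, t1, hBpos, hart]
      calc Real.sqrt p2 ≤ Real.sqrt (12 * a / c * rt ^ 2) := Real.sqrt_le_sqrt h3
        _ = Real.sqrt (12 * a / c) * rt := hr.symm
    · have haB := mul_le_mul_of_nonneg_left hB ha.le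
      have hbV := mul_le_mul_of_nonneg_right hb2 (sq_nonneg V)
      have h4 : V ^ 2 ≤ 12 * a / c * rt ^ 2 := by
        rw [div_mul_eq_mul_div, le_div_iff₀ hc]
        have h4' : a * (V ^ 2 * c) ≤ a * (12 * a * rt ^ 2) := by
          linarith [haB, hbV, sq_nonneg (a * X - b * V), ha2rt]
        exact le_of_mul_le_mul_left h4' ha
      calc |V| = Real.sqrt (V ^ 2) := (Real.sqrt_sq_eq_abs V).symm
        _ ≤ Real.sqrt (12 * a / c * rt ^ 2) := Real.sqrt_le_sqrt h4
        _ = Real.sqrt (12 * a / c) * rt := hr.symm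

end
end

section
/- Let d ≥ 1, let x̃ = 0 ∈ ℝ^d and ṽ = (0', ṽ_d) ∈ ℝ^d with ṽ_d < 0, and let r̃, κ, a, b, c > 0 satisfy √(ac) ≥ 8b and a ≥ 4c. Define ξ_d = √(ac) r̃ / √(ac − b²), η_d = ṽ_d + (b/c) ξ_d, X_d = x_d − ξ_d, V_d = v_d − η_d, ρ(x,v) = √( a|κ x'|² + c|v'|² + a X_d² − 2b X_d V_d + c V_d² ), and 𝒫 = {(x,v) : √a · r̃ ≤ ρ(x,v) ≤ 3√a · r̃} ∩ 𝒪. Then: (i) if |ṽ_d| ≥ 2b r̃ / c, then |η_d| ≥ (9/20)|ṽ_d| and η_d (a X_d − b V_d) ≥ a r̃ |ṽ_d| / 4 for all (x,v) ∈ 𝒫; (ii) if |ṽ_d| ≥ 8√(a/c) · r̃, then |v_d| ≥ |ṽ_d|/2 and v_d (a X_d − b V_d) ≥ a r̃ |ṽ_d| / 4 for all (x,v) ∈ 𝒫. -/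
open scoped RealInnerProductSpace
open Real

noncomputable section

private lemma pns_nonneg' {d : ℕ} (u : Ee (d+1)) : 0 ≤ pns u :=
  Finset.sum_nonneg fun _ _ => sq_nonneg _

private lemma aux_b2 {a b c : ℝ} (ha : 0 < a) (hb : 0 < b) (hc : 0 < c)
    (hab : 8 * b ≤ Real.sqrt (a * c)) : 64 * b ^ 2 ≤ a * c := by
  have h1 : (8 * b) ^ 2 ≤ Real.sqrt (a * c) ^ 2 :=
    pow_le_pow_left₀ (by positivity) hab 2
  rw [Real.sq_sqrt (by positivity : (0:ℝ) ≤ a * c)] at h1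
  nlinarith

private lemma xi_bounds {a b c rt ξd : ℝ} (ha : 0 < a) (hb : 0 < b) (hc : 0 < c)
    (hrt : 0 < rt) (hb2 : 64 * b ^ 2 ≤ a * c)
    (hξ : ξd = Real.sqrt (a * c) * rt / Real.sqrt (a * c - b ^ 2)) :
    rt ≤ ξd ∧ ξd ≤ 11 / 10 * rt := by
  have hpos : 0 < a * c - b ^ 2 := by nlinarith
  have ht : 0 < Real.sqrt (a * c - b ^ 2) := Real.sqrt_pos.mpr hpos
  have hs : 0 < Real.sqrt (a * c) := Real.sqrt_pos.mpr (by positivity)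
  have hts : Real.sqrt (a * c - b ^ 2) ≤ Real.sqrt (a * c) :=
    Real.sqrt_le_sqrt (by nlinarith)
  have h1 := Real.sq_sqrt hpos.le
  have h2 := Real.sq_sqrt (show (0:ℝ) ≤ a * c by positivity)
  have hst : Real.sqrt (a * c) ≤ 11 / 10 * Real.sqrt (a * c - b ^ 2) := by
    nlinarith [ht, hs, hb2]
  constructor
  · rw [hξ, le_div_iff₀ ht]; nlinarith
  · rw [hξ, div_le_iff₀ ht]; nlinarith

private lemma quad_le {d : ℕ} {κ a b c ξd ηd rt : ℝ} (ha : 0 < a) (hc : 0 < c)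
    (x v : Ee (d+1))
    (hρ : rhoQ d κ a b c ξd ηd x v ≤ 3 * (Real.sqrt a * rt)) :
    a * (x (Fin.last d) - ξd) ^ 2
      - 2 * b * (x (Fin.last d) - ξd) * (v (Fin.last d) - ηd)
      + c * (v (Fin.last d) - ηd) ^ 2 ≤ 9 * a * rt ^ 2 := by
  unfold rhoQ at hρ
  rw [Real.sqrt_le_iff] at hρ
  obtain ⟨-, h2⟩ := hρ
  have hsq : Real.sqrt a ^ 2 = a := Real.sq_sqrt ha.le
  have h3 : (3 * (Real.sqrt a * rt)) ^ 2 = 9 * a * rt ^ 2 := by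
    rw [mul_pow, mul_pow, hsq]; ring
  rw [h3] at h2
  have hx := pns_nonneg' x
  have hv := pns_nonneg' v
  nlinarith [mul_nonneg (mul_nonneg ha.le (sq_nonneg κ)) hx, mul_nonneg hc.le hv]

private lemma arith_pt {a b c rt X V : ℝ}
    (ha : 0 < a) (hb : 0 < b) (hc : 0 < c) (hrt : 0 < rt)
    (hb2 : 64 * b ^ 2 ≤ a * c)
    (hq : a * X ^ 2 - 2 * b * X * V + c * V ^ 2 ≤ 9 * a * rt ^ 2)
    (hX : X ≤ -rt) :
    63 * c * V ^ 2 ≤ 576 * a * rt ^ 2 ∧ 5 / 9 * (a * rt) ≤ b * V - a * X := by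
  have hV2 : 63 * c * V ^ 2 ≤ 576 * a * rt ^ 2 := by
    nlinarith [sq_nonneg (a * X - b * V), mul_le_mul_of_nonneg_left hq ha.le,
      sq_nonneg V, mul_pos ha hc]
  refine ⟨hV2, ?_⟩
  have hP2 : (b * V) ^ 2 ≤ 1 / 7 * (a * rt) ^ 2 := by
    nlinarith [mul_le_mul_of_nonneg_right hb2 (sq_nonneg V),
      mul_le_mul_of_nonneg_left hV2 ha.le]
  have hbV : -(4 / 9 * (a * rt)) ≤ b * V := by
    nlinarith [hP2, sq_nonneg (b * V + 4 / 9 * (a * rt)), mul_pos ha hrt]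
  nlinarith [mul_le_mul_of_nonneg_left hX ha.le]

private lemma main_pt {d : ℕ} {κ a b c ξd ηd rt : ℝ}
    (ha : 0 < a) (hb : 0 < b) (hc : 0 < c) (hrt : 0 < rt)
    (hb2 : 64 * b ^ 2 ≤ a * c) (hξ1 : rt ≤ ξd)
    (x v : Ee (d+1))
    (hρ : rhoQ d κ a b c ξd ηd x v ≤ 3 * (Real.sqrt a * rt))
    (hO : x (Fin.last d) ≤ 0) :
    63 * c * (v (Fin.last d) - ηd) ^ 2 ≤ 576 * a * rt ^ 2 ∧
    5 / 9 * (a * rt) ≤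
      b * (v (Fin.last d) - ηd) - a * (x (Fin.last d) - ξd) :=
  arith_pt ha hb hc hrt hb2 (quad_le (b := b) ha hc x v hρ) (by linarith)

set_option maxHeartbeats 1600000 in
/-- **Coercivity near the incoming boundary (Lemma 3.2).**  For
`(x̃,ṽ) = (0,(0',ṽ_d)) ∈ Γ₋` (so `ṽ_d < 0`) and parameters `r̃, κ, a, b, c > 0` with
`√(ac) ≥ 8b` and `a ≥ 4c`, with `ξ_d, η_d, X_d, V_d, ρ, 𝒫` as stated:
(i) if `|ṽ_d| ≥ 2br̃/c` then `|η_d| ≥ (9/20)|ṽ_d|` and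
`η_d (a X_d − b V_d) ≥ a r̃ |ṽ_d| / 4` on `𝒫`;
(ii) if `|ṽ_d| ≥ 8√(a/c)·r̃` then `|v_d| ≥ |ṽ_d|/2` and
`v_d (a X_d − b V_d) ≥ a r̃ |ṽ_d| / 4` on `𝒫`. -/
theorem stmt_7 (d : ℕ) (vtd rt κ a b c ξd ηd : ℝ)
    (hvtd : vtd < 0)
    (hrt : 0 < rt) (hκ : 0 < κ) (ha : 0 < a) (hb : 0 < b) (hc : 0 < c)
    (hab : 8 * b ≤ Real.sqrt (a * c)) (hac : 4 * c ≤ a)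
    (hξ : ξd = Real.sqrt (a * c) * rt / Real.sqrt (a * c - b ^ 2))
    (hη : ηd = vtd + (b / c) * ξd) :
    -- (i)
    (2 * b * rt / c ≤ |vtd| →
      (9 / 20) * |vtd| ≤ |ηd| ∧
      ∀ x v : Ee (d+1),
        Real.sqrt a * rt ≤ rhoQ d κ a b c ξd ηd x v →
        rhoQ d κ a b c ξd ηd x v ≤ 3 * (Real.sqrt a * rt) →
        (x, v) ∈ Oset d →
        a * rt * |vtd| / 4 ≤
          ηd * (a * (x (Fin.last d) - ξd) - b * (v (Fin.last d) - ηd))) ∧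
    -- (ii)
    (8 * Real.sqrt (a / c) * rt ≤ |vtd| →
      ∀ x v : Ee (d+1),
        Real.sqrt a * rt ≤ rhoQ d κ a b c ξd ηd x v →
        rhoQ d κ a b c ξd ηd x v ≤ 3 * (Real.sqrt a * rt) →
        (x, v) ∈ Oset d →
        |vtd| / 2 ≤ |v (Fin.last d)| ∧
        a * rt * |vtd| / 4 ≤
          v (Fin.last d) * (a * (x (Fin.last d) - ξd) - b * (v (Fin.last d) - ηd))) := by
  have hb2 : 64 * b ^ 2 ≤ a * c := aux_b2 ha hb hc hab
  obtain ⟨hξ1, hξ2⟩ := xi_bounds ha hb hc hrt hb2 hξ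
  have habs : |vtd| = -vtd := abs_of_neg hvtd
  constructor
  · -- part (i)
    intro hvt
    rw [habs, div_le_iff₀ hc] at hvt
    have hbξ : b / c * ξd ≤ 11 / 20 * (-vtd) := by
      rw [div_mul_eq_mul_div, div_le_iff₀ hc]
      nlinarith [mul_le_mul_of_nonneg_left hξ2 hb.le]
    have hη' : ηd ≤ -(9 / 20 * (-vtd)) := by rw [hη]; linarith
    have hηneg : ηd ≤ 0 := by nlinarith
    constructor
    · rw [habs, abs_of_nonpos hηneg]; linarith
    · intro x v hρ1 hρ2 hO
      have hO' : x (Fin.last d) ≤ 0 := hO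
      obtain ⟨hV2, hKey⟩ := main_pt ha hb hc hrt hb2 hξ1 x v hρ2 hO'
      have h5 : (9 / 20 * (-vtd)) * (5 / 9 * (a * rt)) ≤
          (-ηd) * (b * (v (Fin.last d) - ηd) - a * (x (Fin.last d) - ξd)) :=
        mul_le_mul (by linarith) hKey (by positivity) (by linarith)
      rw [habs]
      nlinarith [h5]
  · -- part (ii)
    intro hvt x v hρ1 hρ2 hO
    have hO' : x (Fin.last d) ≤ 0 := hO
    obtain ⟨hV2, hKey⟩ := main_pt ha hb hc hrt hb2 hξ1 x v hρ2 hO'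
    obtain ⟨q, hqdef⟩ : ∃ t : ℝ, t = Real.sqrt (a / c) := ⟨_, rfl⟩
    rw [← hqdef] at hvt
    have hq0 : 0 ≤ q := hqdef ▸ Real.sqrt_nonneg _
    have hq2 : q ^ 2 = a / c := by rw [hqdef]; exact Real.sq_sqrt (by positivity)
    have hq2' : c * q ^ 2 = a := by rw [hq2]; field_simp
    have hqsq : (q * c) ^ 2 = a * c := by
      rw [mul_pow, hq2]; field_simp
    have hqc : Real.sqrt (a * c) = q * c := by
      rw [← hqsq, Real.sqrt_sq (by positivity : (0:ℝ) ≤ q * c)]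
    rw [habs] at hvt
    have hvt' : 8 * (q * rt) ≤ -vtd := by linarith [hvt]
    have hb8 : 8 * b ≤ q * c := by rw [← hqc]; exact hab
    have h1 : (8 * (q * rt)) ^ 2 ≤ (-vtd) ^ 2 :=
      pow_le_pow_left₀ (by positivity) hvt' 2
    have h64 : 64 * a * rt ^ 2 ≤ c * vtd ^ 2 := by
      nlinarith [mul_le_mul_of_nonneg_left h1 hc.le, hq2']
    obtain ⟨V, hVdef⟩ : ∃ t : ℝ, t = v (Fin.last d) - ηd := ⟨_, rfl⟩
    rw [← hVdef] at hV2 hKey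
    have h7 : 7 * V ^ 2 ≤ vtd ^ 2 := by nlinarith [hV2, h64, hc]
    have hVle : V ≤ 309 / 640 * (-vtd) := by
      nlinarith [h7, hvtd, sq_nonneg (V + 309 / 640 * vtd)]
    have hbξ : b / c * ξd ≤ 11 / 640 * (-vtd) := by
      rw [div_mul_eq_mul_div, div_le_iff₀ hc]
      have t1 : b * ξd ≤ (q * c / 8) * (11 / 10 * rt) :=
        mul_le_mul (by linarith) hξ2 (by linarith) (by positivity)
      have t2 : q * rt * c ≤ (-vtd) / 8 * c :=
        mul_le_mul_of_nonneg_right (by linarith) hc.le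
      nlinarith [t1, t2]
    have hη2 : ηd ≤ 629 / 640 * vtd := by rw [hη]; linarith
    have hvd : v (Fin.last d) ≤ 1 / 2 * vtd := by
      have hvV : v (Fin.last d) = V + ηd := by rw [hVdef]; ring
      rw [hvV]; linarith
    have hvdneg : v (Fin.last d) ≤ 0 := by linarith
    constructor
    · rw [habs, abs_of_nonpos hvdneg]; linarith
    · have h5 : (-vtd / 2) * (5 / 9 * (a * rt)) ≤
          (-(v (Fin.last d))) * (b * V - a * (x (Fin.last d) - ξd)) :=
        mul_le_mul (by linarith) hKey (by positivity) (by linarith)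
      rw [habs, ← hVdef]
      nlinarith [h5, mul_pos ha hrt, hvtd]

end
end

section
/- Let Θ > 0 and τ₀ > 0. Define φ : [0,∞) → ℝ by φ(τ) = ∫₀^τ exp(−Θ/s) ds (with integrand extended by 0 at s = 0), and Φ : [τ₀, ∞) → ℝ by Φ(τ) = (φ(τ) − φ(τ₀)) / (φ(9τ₀) − φ(τ₀)). Then Φ is nonnegative, satisfies the ordinary differential equation τ² Φ''(τ) − Θ Φ'(τ) = 0 for τ ≥ τ₀, and for every τ ∈ [τ₀, 4τ₀] one has Φ(τ) ≤ Φ(4τ₀) ≤ (1 + Θ/τ₀) · exp(−Θ/(8τ₀)). -/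
open Real MeasureTheory

noncomputable section

/-- `φ(τ) = ∫₀^τ exp(−Θ/s) ds`. -/
def phiODE (Θ : ℝ) (τ : ℝ) : ℝ := ∫ s in (0:ℝ)..τ, Real.exp (-Θ / s)

/-- `Φ(τ) = (φ(τ) − φ(τ₀)) / (φ(9τ₀) − φ(τ₀))`. -/
def PhiODE (Θ τ₀ : ℝ) (τ : ℝ) : ℝ :=
  (phiODE Θ τ - phiODE Θ τ₀) / (phiODE Θ (9 * τ₀) - phiODE Θ τ₀)

lemma aux_meas (Θ : ℝ) : Measurable (fun s : ℝ => Real.exp (-Θ / s)) :=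
  Real.measurable_exp.comp (measurable_const.div measurable_id)

lemma aux_int (Θ : ℝ) (hΘ : 0 < Θ) {a b : ℝ} (ha : 0 ≤ a) (hb : 0 ≤ b) :
    IntervalIntegrable (fun s : ℝ => Real.exp (-Θ / s)) volume a b := by
  rw [intervalIntegrable_iff]
  apply Measure.integrableOn_of_bounded (M := 1)
    (by rw [Set.uIoc]; exact measure_Ioc_lt_top.ne) (aux_meas Θ).aestronglyMeasurable
  filter_upwards [ae_restrict_mem measurableSet_uIoc] with s hs
  have hs0 : 0 < s := lt_of_le_of_lt (le_min ha hb) hs.1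
  rw [Real.norm_eq_abs, abs_of_pos (Real.exp_pos _), Real.exp_le_one_iff, neg_div]
  have : 0 ≤ Θ / s := div_nonneg hΘ.le hs0.le
  linarith

lemma aux_hasDeriv (Θ : ℝ) (hΘ : 0 < Θ) {a : ℝ} (ha : 0 < a) :
    HasDerivAt (phiODE Θ) (Real.exp (-Θ / a)) a := by
  have hc : ContinuousAt (fun s : ℝ => Real.exp (-Θ / s)) a :=
    Real.continuous_exp.continuousAt.comp (continuousAt_const.div continuousAt_id ha.ne')
  exact intervalIntegral.integral_hasDerivAt_right (aux_int Θ hΘ le_rfl ha.le)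
    ⟨Set.univ, Filter.univ_mem, (aux_meas Θ).aestronglyMeasurable.restrict⟩ hc

lemma aux_sub (Θ : ℝ) (hΘ : 0 < Θ) {a b : ℝ} (ha : 0 ≤ a) (hb : 0 ≤ b) :
    phiODE Θ b - phiODE Θ a = ∫ s in a..b, Real.exp (-Θ / s) := by
  have h := intervalIntegral.integral_add_adjacent_intervals
    (aux_int Θ hΘ le_rfl ha) (aux_int Θ hΘ ha hb)
  unfold phiODE
  linarith

lemma aux_mono (Θ : ℝ) (hΘ : 0 < Θ) {a b : ℝ} (ha : 0 ≤ a) (hab : a ≤ b) :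
    phiODE Θ a ≤ phiODE Θ b := by
  have h : 0 ≤ ∫ s in a..b, Real.exp (-Θ / s) :=
    intervalIntegral.integral_nonneg hab (fun x _ => (Real.exp_pos _).le)
  have := aux_sub Θ hΘ ha (ha.trans hab)
  linarith

lemma aux_lb (Θ : ℝ) (hΘ : 0 < Θ) {a b : ℝ} (ha : 0 < a) (hab : a ≤ b) :
    (b - a) * Real.exp (-Θ / a) ≤ ∫ s in a..b, Real.exp (-Θ / s) := by
  have h := intervalIntegral.integral_mono_on (f := fun _ : ℝ => Real.exp (-Θ / a))
    hab intervalIntegrable_const (aux_int Θ hΘ ha.le (ha.trans_le hab).le) ?_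
  · simpa using h
  · intro s hs
    have hs0 : 0 < s := lt_of_lt_of_le ha hs.1
    have : -Θ / a ≤ -Θ / s := by
      rw [neg_div, neg_div, neg_le_neg_iff]
      exact div_le_div_of_nonneg_left hΘ.le ha hs.1
    exact Real.exp_le_exp.mpr this

lemma aux_ub (Θ : ℝ) (hΘ : 0 < Θ) {a b : ℝ} (ha : 0 < a) (hab : a ≤ b) :
    (∫ s in a..b, Real.exp (-Θ / s)) ≤ (b - a) * Real.exp (-Θ / b) := by
  have hb : 0 < b := ha.trans_le hab
  have h := intervalIntegral.integral_mono_on (g := fun _ : ℝ => Real.exp (-Θ / b))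
    hab (aux_int Θ hΘ ha.le hb.le) intervalIntegrable_const ?_
  · simpa using h
  · intro s hs
    have hs0 : 0 < s := lt_of_lt_of_le ha hs.1
    have : -Θ / s ≤ -Θ / b := by
      rw [neg_div, neg_div, neg_le_neg_iff]
      exact div_le_div_of_nonneg_left hΘ.le hs0 hs.2
    exact Real.exp_le_exp.mpr this

/-- **ODE lemma.** Let `Θ > 0` and `τ₀ > 0`.  The function
`Φ(τ) = (φ(τ) − φ(τ₀)) / (φ(9τ₀) − φ(τ₀))`, with `φ(τ) = ∫₀^τ exp(−Θ/s) ds`,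
is nonnegative on `[τ₀, ∞)`, satisfies `τ² Φ''(τ) − Θ Φ'(τ) = 0` for `τ ≥ τ₀`, and
for every `τ ∈ [τ₀, 4τ₀]` one has
`Φ(τ) ≤ Φ(4τ₀) ≤ (1 + Θ/τ₀) · exp(−Θ/(8τ₀))`. -/
theorem stmt_11 (Θ τ₀ : ℝ) (hΘ : 0 < Θ) (hτ₀ : 0 < τ₀) :
    (∀ τ : ℝ, τ₀ ≤ τ → 0 ≤ PhiODE Θ τ₀ τ) ∧
    (∀ τ : ℝ, τ₀ ≤ τ →
      τ ^ 2 * deriv (deriv (PhiODE Θ τ₀)) τ - Θ * deriv (PhiODE Θ τ₀) τ = 0) ∧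
    (∀ τ ∈ Set.Icc τ₀ (4 * τ₀), PhiODE Θ τ₀ τ ≤ PhiODE Θ τ₀ (4 * τ₀)) ∧
    PhiODE Θ τ₀ (4 * τ₀) ≤ (1 + Θ / τ₀) * Real.exp (-Θ / (8 * τ₀)) := by
  set D : ℝ := phiODE Θ (9 * τ₀) - phiODE Θ τ₀ with hD_def
  have hDlb : τ₀ * Real.exp (-Θ / (8 * τ₀)) ≤ D := by
    have hsplit := intervalIntegral.integral_add_adjacent_intervals
      (aux_int Θ hΘ hτ₀.le (by linarith : (0:ℝ) ≤ 8 * τ₀))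
      (aux_int Θ hΘ (by linarith : (0:ℝ) ≤ 8 * τ₀) (by linarith : (0:ℝ) ≤ 9 * τ₀))
    have h1 : 0 ≤ ∫ s in τ₀..(8 * τ₀), Real.exp (-Θ / s) :=
      intervalIntegral.integral_nonneg (by linarith) (fun x _ => (Real.exp_pos _).le)
    have h2 := aux_lb Θ hΘ (by linarith : (0:ℝ) < 8 * τ₀) (by linarith : 8 * τ₀ ≤ 9 * τ₀)
    have h3 := aux_sub Θ hΘ hτ₀.le (by linarith : (0:ℝ) ≤ 9 * τ₀)
    rw [hD_def, h3, ← hsplit]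
    have : (9 * τ₀ - 8 * τ₀) = τ₀ := by ring
    rw [this] at h2
    linarith
  have hDpos : 0 < D :=
    lt_of_lt_of_le (mul_pos hτ₀ (Real.exp_pos _)) hDlb
  have hnonneg : ∀ τ : ℝ, τ₀ ≤ τ → 0 ≤ PhiODE Θ τ₀ τ := by
    intro τ hτ
    exact div_nonneg (by linarith [aux_mono Θ hΘ hτ₀.le hτ]) hDpos.le
  have hmono : ∀ τ ∈ Set.Icc τ₀ (4 * τ₀), PhiODE Θ τ₀ τ ≤ PhiODE Θ τ₀ (4 * τ₀) := by
    intro τ hτ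
    have := aux_mono Θ hΘ (hτ₀.le.trans hτ.1) hτ.2
    unfold PhiODE
    rw [← hD_def]
    gcongr
  refine ⟨hnonneg, ?_, hmono, ?_⟩
  · -- ODE
    intro τ hτ
    have hτpos : 0 < τ := hτ₀.trans_le hτ
    have hΦ' : ∀ t : ℝ, 0 < t →
        HasDerivAt (PhiODE Θ τ₀) (Real.exp (-Θ / t) / D) t := by
      intro t ht
      have := ((aux_hasDeriv Θ hΘ ht).sub_const (phiODE Θ τ₀)).div_const D
      exact this
    have hd1 : deriv (PhiODE Θ τ₀) τ = Real.exp (-Θ / τ) / D := (hΦ' τ hτpos).deriv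
    have hEq : Set.EqOn (deriv (PhiODE Θ τ₀)) (fun t => Real.exp (-Θ / t) / D)
        (Set.Ioi (0:ℝ)) := fun t ht => (hΦ' t ht).deriv
    have hd2 : deriv (deriv (PhiODE Θ τ₀)) τ
        = Real.exp (-Θ / τ) * (Θ / τ ^ 2) / D := by
      have heq : deriv (PhiODE Θ τ₀) =ᶠ[nhds τ] (fun t => Real.exp (-Θ / t) / D) :=
        hEq.eventuallyEq_of_mem (Ioi_mem_nhds hτpos)
      rw [heq.deriv_eq]
      have hinner : HasDerivAt (fun t : ℝ => -Θ / t) (Θ / τ ^ 2) τ := by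
        have h : HasDerivAt (fun t : ℝ => -Θ / t) (-Θ * -(τ ^ 2)⁻¹) τ := by
          simpa only [div_eq_mul_inv] using (hasDerivAt_inv hτpos.ne').const_mul (-Θ)
        have h2 : (-Θ) * -(τ ^ 2)⁻¹ = Θ / τ ^ 2 := by field_simp
        rwa [h2] at h
      exact (hinner.exp.div_const D).deriv
    rw [hd1, hd2]
    field_simp
    ring
  · -- final bound
    have hnum : phiODE Θ (4 * τ₀) - phiODE Θ τ₀ ≤ 3 * τ₀ * Real.exp (-Θ / (4 * τ₀)) := by
      rw [aux_sub Θ hΘ hτ₀.le (by linarith : (0:ℝ) ≤ 4 * τ₀)]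
      have := aux_ub Θ hΘ hτ₀ (by linarith : τ₀ ≤ 4 * τ₀)
      calc (∫ s in τ₀..(4*τ₀), Real.exp (-Θ / s)) ≤ (4 * τ₀ - τ₀) * Real.exp (-Θ / (4 * τ₀)) := this
        _ = 3 * τ₀ * Real.exp (-Θ / (4 * τ₀)) := by ring
    by_cases hcase : 2 * τ₀ ≤ Θ
    · -- use 3 ≤ 1 + Θ/τ₀
      have h1 : PhiODE Θ τ₀ (4 * τ₀) ≤ (3 * τ₀ * Real.exp (-Θ / (4 * τ₀))) / (τ₀ * Real.exp (-Θ / (8 * τ₀))) := by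
        unfold PhiODE
        rw [← hD_def]
        apply div_le_div₀ (by positivity) hnum (mul_pos hτ₀ (Real.exp_pos _)) hDlb
      have he : Real.exp (-Θ / (4 * τ₀)) = Real.exp (-Θ / (8 * τ₀)) * Real.exp (-Θ / (8 * τ₀)) := by
        rw [← Real.exp_add]; congr 1; field_simp; ring
      have h2 : (3 * τ₀ * Real.exp (-Θ / (4 * τ₀))) / (τ₀ * Real.exp (-Θ / (8 * τ₀)))
          = 3 * Real.exp (-Θ / (8 * τ₀)) := by
        rw [he, div_eq_iff (by positivity)]; ring
      have h3 : (3:ℝ) ≤ 1 + Θ / τ₀ := by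
        have : (2:ℝ) ≤ Θ / τ₀ := (le_div_iff₀ hτ₀).mpr (by linarith)
        linarith
      calc PhiODE Θ τ₀ (4 * τ₀) ≤ 3 * Real.exp (-Θ / (8 * τ₀)) := h1.trans_eq h2
        _ ≤ (1 + Θ / τ₀) * Real.exp (-Θ / (8 * τ₀)) :=
            mul_le_mul_of_nonneg_right h3 (Real.exp_pos _).le
    · -- Θ/τ₀ ≤ 2 : use Φ ≤ 1
      push_neg at hcase
      have hΦle1 : PhiODE Θ τ₀ (4 * τ₀) ≤ 1 := by
        unfold PhiODE
        rw [← hD_def, div_le_one hDpos, hD_def]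
        have := aux_mono Θ hΘ (by linarith : (0:ℝ) ≤ 4 * τ₀) (by linarith : 4 * τ₀ ≤ 9 * τ₀)
        linarith
      have hx : Θ / τ₀ < 2 := (div_lt_iff₀ hτ₀).mpr (by linarith)
      have hx0 : 0 < Θ / τ₀ := div_pos hΘ hτ₀
      have key : 1 ≤ (1 + Θ / τ₀) * Real.exp (-Θ / (8 * τ₀)) := by
        have hrw : -Θ / (8 * τ₀) = -((Θ / τ₀) / 8) := by rw [div_div, neg_div, mul_comm]
        rw [hrw]
        have h1 := Real.add_one_le_exp (-((Θ / τ₀) / 8))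
        have h2 : (0:ℝ) ≤ (1 + Θ / τ₀) * (Real.exp (-((Θ / τ₀) / 8)) - (1 - (Θ / τ₀) / 8)) :=
          mul_nonneg (by linarith) (by linarith)
        nlinarith [hx0.le, hx.le]
      linarith [hΦle1, key]

end
end

section
/- Let ψ be the nonnegative stationary Kolmogorov solution on ℍ^d₋ × ℝ^d, depending only on (x_d,v_d), satisfying v·∇_x ψ = Δ_v ψ for x_d ≤ 0, ψ = 0 on {x_d = 0, v_d ≤ 0}, and the two-sided asymptotics ψ ≈ (−x_d)^{1/6} on ℛ₀, ψ ≈ √(v_d) on ℛ₊, ψ ≈ √(|v_d|) e^{−v_d³/(9x_d)} on ℛ₋ (as in the construction via Tricomi's confluent hypergeometric function). Then there exist constants r₀, c₀ > 0 and C > 0 such that the function Ψ(t,x,v) := ψ(x,v) − 2 v_d − |v_d|² − t satisfies: (a) L₀ Ψ = 1 on {x_d ≤ 0}; (b) Ψ(z) ≤ C ‖z‖^{1/2} for all z ∈ G_{r₀}, where ‖z‖ = max{|t|^{1/2}, |x|^{1/3}, |v|}; (c) Ψ ≥ 0 on {x_d = 0, v_d ≤ 0}; (d) Ψ ≥ c₀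 on the set ( {t = −r₀²} ∪ {x_d = −r₀³} ∪ {|v_d| = r₀} ) ∩ cl(G_{r₀}). -/
open scoped RealInnerProductSpace
open Real

noncomputable section

private lemma aux_abs_le_norm {n : ℕ} (x : Ee n) (i : Fin n) : |x i| ≤ ‖x‖ := by
  rw [EuclideanSpace.norm_eq, Real.le_sqrt (abs_nonneg _) (by positivity)]
  have h : |x i| ^ 2 = ‖x i‖ ^ 2 := by rw [Real.norm_eq_abs]
  rw [h]
  exact Finset.single_le_sum (f := fun j => ‖x j‖ ^ 2) (fun j _ => sq_nonneg _)
    (Finset.mem_univ i)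

private lemma aux_cube_sixth {a : ℝ} (ha : 0 ≤ a) :
    (a ^ 3 : ℝ) ^ ((1:ℝ)/6) = Real.sqrt a := by
  rw [← Real.rpow_natCast a 3, ← Real.rpow_mul ha, Real.sqrt_eq_rpow]
  norm_num

private lemma aux_mem {d : ℕ} {r : ℝ} {z : Zz (d+1)} (hz : z ∈ GcylH d r 0) :
    -r^2 < z.1 ∧ z.1 ≤ 0 ∧ ‖z.2.1‖ < r^3 ∧ ‖z.2.2‖ < r ∧ z.2.1 (Fin.last d) ≤ 0 := by
  obtain ⟨hq, hb⟩ := hz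
  obtain ⟨h1, h2, h3, h4⟩ := hq
  simp only [Prod.fst_zero, Prod.snd_zero, sub_zero, smul_zero, zero_sub] at h1 h3 h4
  have hcl : IsClosed (HalfSp d) :=
    isClosed_le (EuclideanSpace.proj (Fin.last d)).continuous continuous_const
  rw [hcl.closure_eq] at hb
  exact ⟨h1, h2, h3, h4, hb⟩

private lemma aux_closure {d : ℕ} {r : ℝ} {z : Zz (d+1)} (hz : z ∈ closure (GcylH d r 0)) :
    -r^2 ≤ z.1 ∧ z.1 ≤ 0 ∧ ‖z.2.1‖ ≤ r^3 ∧ ‖z.2.2‖ ≤ r ∧ z.2.1 (Fin.last d) ≤ 0 := by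
  have c1 : Continuous fun w : Zz (d+1) => w.1 := continuous_fst
  have cx : Continuous fun w : Zz (d+1) => w.2.1 := continuous_fst.comp continuous_snd
  have cv : Continuous fun w : Zz (d+1) => w.2.2 := continuous_snd.comp continuous_snd
  have cxd : Continuous fun w : Zz (d+1) => w.2.1 (Fin.last d) :=
    (EuclideanSpace.proj (Fin.last d)).continuous.comp cx
  have hcl : IsClosed {w : Zz (d+1) | -r^2 ≤ w.1 ∧ w.1 ≤ 0 ∧ ‖w.2.1‖ ≤ r^3 ∧
      ‖w.2.2‖ ≤ r ∧ w.2.1 (Fin.last d) ≤ 0} :=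
    (isClosed_le continuous_const c1).inter
      ((isClosed_le c1 continuous_const).inter
      ((isClosed_le cx.norm continuous_const).inter
      ((isClosed_le cv.norm continuous_const).inter
      (isClosed_le cxd continuous_const))))
  refine closure_minimal ?_ hcl hz
  intro w hw
  obtain ⟨h1, h2, h3, h4, h5⟩ := aux_mem hw
  exact ⟨h1.le, h2, h3.le, h4.le, h5⟩

set_option maxHeartbeats 4000000 in
/-- **Barrier at the grazing set (Lemma 4.6).**  Let `ψ` be the nonnegative stationary
Kolmogorov solution on `ℍ^d₋ × ℝ^d`, depending only on `(x_d,v_d)`, with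
`v_d ∂_{x_d}ψ = ∂²_{v_d}ψ` (witnessed by `gx, gv, gvv`), `ψ = 0` on
`{x_d = 0, v_d ≤ 0}`, and the two-sided asymptotics `ψ ≈ (−x_d)^{1/6}` on `ℛ₀`,
`ψ ≈ √(v_d)` on `ℛ₊`, `ψ ≈ √|v_d| e^{−v_d³/(9x_d)}` on `ℛ₋`.  Then there are
`r₀, c₀, C > 0` such that `Ψ(t,x,v) := ψ(x,v) − 2v_d − v_d² − t` satisfies:
(a) `L₀Ψ = 1` on `{x_d ≤ 0}` (expressed through the derivative witnesses);
(b) `Ψ ≤ C‖z‖^{1/2}` on `G_{r₀}`; (c) `Ψ ≥ 0` on `{x_d = 0, v_d ≤ 0}` (within the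
closed cylinder); (d) `Ψ ≥ c₀` on
`({t = −r₀²} ∪ {x_d = −r₀³} ∪ {|v_d| = r₀}) ∩ cl(G_{r₀})`. -/
theorem stmt_18 (d : ℕ) (cstar c₁ c₂ : ℝ) (ψ : Ee (d+1) → Ee (d+1) → ℝ)
    (gx gv gvv : ℝ → ℝ → ℝ)
    (hc : cstar ∈ Set.Ioo (0:ℝ) 1) (hc₁ : 0 < c₁) (hc₁₂ : c₁ ≤ c₂)
    (hpos : ∀ x v, 0 ≤ ψ x v)
    (hdep : ∀ x y v w : Ee (d+1), x (Fin.last d) = y (Fin.last d) →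
      v (Fin.last d) = w (Fin.last d) → ψ x v = ψ y w)
    (hpde : ∀ xd : ℝ, xd ≤ 0 → ∀ vd : ℝ,
      HasDerivWithinAt
        (fun s => ψ (EuclideanSpace.single (Fin.last d) s)
          (EuclideanSpace.single (Fin.last d) vd)) (gx xd vd) (Set.Iic 0) xd ∧
      HasDerivAt
        (fun w => ψ (EuclideanSpace.single (Fin.last d) xd)
          (EuclideanSpace.single (Fin.last d) w)) (gv xd vd) vd ∧
      HasDerivAt (fun w => gv xd w) (gvv xd vd) vd ∧
      vd * gx xd vd = gvv xd vd)
    (hbd : ∀ x v : Ee (d+1), x (Fin.last d) = 0 → v (Fin.last d) ≤ 0 → ψ x v = 0)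
    (hR0 : ∀ x v : Ee (d+1), ‖x‖ < 1 → ‖v‖ < 1 → x (Fin.last d) ≤ 0 →
      (cstar * |v (Fin.last d)|) ^ 3 ≤ -x (Fin.last d) →
      c₁ * (-x (Fin.last d)) ^ ((1:ℝ)/6) ≤ ψ x v ∧
      ψ x v ≤ c₂ * (-x (Fin.last d)) ^ ((1:ℝ)/6))
    (hRp : ∀ x v : Ee (d+1), ‖x‖ < 1 → ‖v‖ < 1 → 0 < v (Fin.last d) →
      0 ≤ -x (Fin.last d) → -x (Fin.last d) ≤ (cstar * v (Fin.last d)) ^ 3 →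
      c₁ * Real.sqrt (v (Fin.last d)) ≤ ψ x v ∧
      ψ x v ≤ c₂ * Real.sqrt (v (Fin.last d)))
    (hRm : ∀ x v : Ee (d+1), ‖x‖ < 1 → ‖v‖ < 1 → v (Fin.last d) < 0 →
      0 < -x (Fin.last d) → -x (Fin.last d) ≤ (cstar * |v (Fin.last d)|) ^ 3 →
      c₁ * Real.sqrt |v (Fin.last d)|
          * Real.exp (-(v (Fin.last d)) ^ 3 / (9 * x (Fin.last d))) ≤ ψ x v ∧
      ψ x v ≤ c₂ * Real.sqrt |v (Fin.last d)|
          * Real.exp (-(v (Fin.last d)) ^ 3 / (9 * x (Fin.last d)))) :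
    ∃ r₀ c₀ C : ℝ, 0 < r₀ ∧ 0 < c₀ ∧ 0 < C ∧
      -- (a) L₀Ψ = 1 in {x_d ≤ 0}: since Ψ(t,x,v) = ψ(x,v) − 2v_d − v_d² − t, its
      -- transport derivative is v_d ∂_{x_d}ψ − 1 and its velocity Laplacian is
      -- ∂²_{v_d}ψ − 2, so the identity reads as follows.
      (∀ xd : ℝ, xd ≤ 0 → ∀ vd : ℝ,
        (-1) + vd * gx xd vd - (gvv xd vd - 2) = 1) ∧
      -- (b) Ψ ≲ ‖z‖^{1/2} in G_{r₀}
      (∀ z ∈ GcylH d r₀ 0,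
        ψ z.2.1 z.2.2 - 2 * z.2.2 (Fin.last d) - (z.2.2 (Fin.last d)) ^ 2 - z.1
          ≤ C * kinGauge z ^ ((1:ℝ)/2)) ∧
      -- (c) Ψ ≥ 0 on {x_d = 0, v_d ≤ 0}
      (∀ z ∈ closure (GcylH d r₀ 0), z.2.1 (Fin.last d) = 0 →
        z.2.2 (Fin.last d) ≤ 0 →
        0 ≤ ψ z.2.1 z.2.2 - 2 * z.2.2 (Fin.last d) - (z.2.2 (Fin.last d)) ^ 2 - z.1) ∧
      -- (d) Ψ ≥ c₀ on ({t = −r₀²} ∪ {x_d = −r₀³} ∪ {|v_d| = r₀}) ∩ cl(G_{r₀})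
      (∀ z ∈ closure (GcylH d r₀ 0),
        (z.1 = -r₀ ^ 2 ∨ z.2.1 (Fin.last d) = -r₀ ^ 3 ∨ |z.2.2 (Fin.last d)| = r₀) →
        c₀ ≤ ψ z.2.1 z.2.2 - 2 * z.2.2 (Fin.last d) - (z.2.2 (Fin.last d)) ^ 2 - z.1) := by
  obtain ⟨hcst0, hcst1⟩ := hc
  have hc2 : 0 < c₂ := lt_of_lt_of_le hc₁ hc₁₂
  set r₀ : ℝ := min (1/2) ((c₁ * cstar / 6)^2) with hr₀def
  have hr₀pos : 0 < r₀ := lt_min (by norm_num) (by positivity)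
  have hr₀half : r₀ ≤ 1/2 := min_le_left _ _
  have hr₀1 : r₀ ≤ 1 := hr₀half.trans (by norm_num)
  have hsrpos : 0 < Real.sqrt r₀ := Real.sqrt_pos.mpr hr₀pos
  have hsr : Real.sqrt r₀ ≤ c₁ * cstar / 6 := by
    have h := min_le_right (1/2 : ℝ) ((c₁ * cstar / 6)^2)
    have h2 : Real.sqrt r₀ ≤ Real.sqrt ((c₁ * cstar / 6)^2) := Real.sqrt_le_sqrt h
    rwa [Real.sqrt_sq (by positivity)] at h2
  have hrs : r₀ = Real.sqrt r₀ * Real.sqrt r₀ := (Real.mul_self_sqrt hr₀pos.le).symm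
  have h3r : 3 * r₀ ≤ (c₁ * cstar / 2) * Real.sqrt r₀ := by nlinarith
  -- lower bound of ψ for positive vd
  have psi_low : ∀ x v : Ee (d+1), ‖x‖ < 1 → ‖v‖ < 1 → x (Fin.last d) ≤ 0 →
      0 < v (Fin.last d) → c₁ * cstar * Real.sqrt (v (Fin.last d)) ≤ ψ x v := by
    intro x v hx hv hxle hvd
    have hsv : 0 ≤ Real.sqrt (v (Fin.last d)) := Real.sqrt_nonneg _
    rcases le_or_gt (-x (Fin.last d)) ((cstar * v (Fin.last d))^3) with h | h
    · have hψ := (hRp x v hx hv hvd (by linarith) h).1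
      nlinarith [mul_nonneg (mul_nonneg hc₁.le hsv) (sub_nonneg.mpr hcst1.le)]
    · have habs : |v (Fin.last d)| = v (Fin.last d) := abs_of_pos hvd
      have hψ := (hR0 x v hx hv hxle (by rw [habs]; exact h.le)).1
      have hmono : ((cstar * v (Fin.last d))^3) ^ ((1:ℝ)/6)
          ≤ (-x (Fin.last d)) ^ ((1:ℝ)/6) :=
        Real.rpow_le_rpow (by positivity) h.le (by norm_num)
      rw [aux_cube_sixth (by positivity),
        Real.sqrt_mul hcst0.le] at hmono
      have hcs : cstar ≤ Real.sqrt cstar := by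
        have hs1 : Real.sqrt cstar ≤ 1 := by
          calc Real.sqrt cstar ≤ Real.sqrt 1 := Real.sqrt_le_sqrt hcst1.le
          _ = 1 := Real.sqrt_one
        nlinarith [Real.mul_self_sqrt hcst0.le, Real.sqrt_nonneg cstar]
      have h1 : c₁ * (Real.sqrt cstar * Real.sqrt (v (Fin.last d)))
          ≤ c₁ * (-x (Fin.last d)) ^ ((1:ℝ)/6) :=
        mul_le_mul_of_nonneg_left hmono hc₁.le
      nlinarith [mul_nonneg (mul_nonneg hc₁.le hsv) (sub_nonneg.mpr hcs)]
  -- upper bound of ψ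
  have psi_up : ∀ x v : Ee (d+1), ‖x‖ < 1 → ‖v‖ < 1 → x (Fin.last d) ≤ 0 →
      ψ x v ≤ c₂ * max (Real.sqrt |v (Fin.last d)|)
        ((-x (Fin.last d)) ^ ((1:ℝ)/6)) := by
    intro x v hx hv hxle
    have hmax1 : Real.sqrt |v (Fin.last d)| ≤ max (Real.sqrt |v (Fin.last d)|)
        ((-x (Fin.last d)) ^ ((1:ℝ)/6)) := le_max_left _ _
    have hmax2 : (-x (Fin.last d)) ^ ((1:ℝ)/6) ≤ max (Real.sqrt |v (Fin.last d)|)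
        ((-x (Fin.last d)) ^ ((1:ℝ)/6)) := le_max_right _ _
    rcases lt_trichotomy (v (Fin.last d)) 0 with hvd | hvd | hvd
    · rcases eq_or_lt_of_le hxle with hx0 | hx0
      · rw [hbd x v hx0 hvd.le]
        exact mul_nonneg hc2.le (le_trans (Real.sqrt_nonneg _) hmax1)
      · rcases le_or_gt (-x (Fin.last d)) ((cstar * |v (Fin.last d)|)^3) with h | h
        · have hψ := (hRm x v hx hv hvd (by linarith) h).2
          have hexp : Real.exp (-(v (Fin.last d))^3 / (9 * x (Fin.last d))) ≤ 1 := by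
            rw [Real.exp_le_one_iff]
            have hnum : 0 ≤ -(v (Fin.last d))^3 := by nlinarith [sq_nonneg (v (Fin.last d))]
            have hden : 9 * x (Fin.last d) ≤ 0 := by linarith
            exact div_nonpos_iff.mpr (Or.inl ⟨hnum, hden⟩)
          calc ψ x v ≤ c₂ * Real.sqrt |v (Fin.last d)|
                * Real.exp (-(v (Fin.last d))^3 / (9 * x (Fin.last d))) := hψ
            _ ≤ c₂ * Real.sqrt |v (Fin.last d)| * 1 :=
                mul_le_mul_of_nonneg_left hexp (by positivity)
            _ = c₂ * Real.sqrt |v (Fin.last d)| := mul_one _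
            _ ≤ _ := mul_le_mul_of_nonneg_left hmax1 hc2.le
        · exact le_trans (hR0 x v hx hv hxle h.le).2
            (mul_le_mul_of_nonneg_left hmax2 hc2.le)
    · have h : (cstar * |v (Fin.last d)|)^3 ≤ -x (Fin.last d) := by
        rw [hvd]; simp; linarith
      exact le_trans (hR0 x v hx hv hxle h).2 (mul_le_mul_of_nonneg_left hmax2 hc2.le)
    · rcases le_or_gt (-x (Fin.last d)) ((cstar * v (Fin.last d))^3) with h | h
      · have hψ := (hRp x v hx hv hvd (by linarith) h).2
        have he : Real.sqrt (v (Fin.last d)) = Real.sqrt |v (Fin.last d)| := by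
          rw [abs_of_pos hvd]
        rw [he] at hψ
        exact le_trans hψ (mul_le_mul_of_nonneg_left hmax1 hc2.le)
      · have habs : |v (Fin.last d)| = v (Fin.last d) := abs_of_pos hvd
        exact le_trans (hR0 x v hx hv hxle (by rw [habs]; exact h.le)).2
          (mul_le_mul_of_nonneg_left hmax2 hc2.le)
  refine ⟨r₀, min (r₀^2) ((c₁ * cstar / 2) * Real.sqrt r₀), c₂ + 3, hr₀pos,
    lt_min (by positivity) (mul_pos (by positivity) hsrpos), by linarith, ?_, ?_, ?_, ?_⟩
  · -- (a)
    intro xd hxd vd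
    have h := (hpde xd hxd vd).2.2.2
    linarith
  · -- (b)
    intro z hz
    obtain ⟨ht1, ht2, hxn, hvn, hxdle⟩ := aux_mem hz
    have hx1 : ‖z.2.1‖ < 1 := lt_of_lt_of_le hxn (by nlinarith)
    have hv1 : ‖z.2.2‖ < 1 := lt_of_lt_of_le hvn (by linarith)
    have hgt : |z.1| ^ ((1:ℝ)/2) ≤ kinGauge z := le_max_left _ _
    have hgx : ‖z.2.1‖ ^ ((1:ℝ)/3) ≤ kinGauge z :=
      le_trans (le_max_left _ _) (le_max_right _ _)
    have hgv : ‖z.2.2‖ ≤ kinGauge z := le_trans (le_max_right _ _) (le_max_right _ _)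
    have hg0 : 0 ≤ kinGauge z := le_trans (norm_nonneg _) hgv
    have hg1 : kinGauge z ≤ 1 := by
      refine max_le (Real.rpow_le_one (abs_nonneg _) ?_ (by norm_num))
        (max_le (Real.rpow_le_one (norm_nonneg _) (by nlinarith) (by norm_num))
          (by linarith))
      rw [abs_le]
      constructor <;> nlinarith
    have hsq0 : 0 ≤ Real.sqrt (kinGauge z) := Real.sqrt_nonneg _
    have hgsq : kinGauge z ≤ Real.sqrt (kinGauge z) := by
      have h1 : Real.sqrt (kinGauge z) ≤ 1 := by
        calc Real.sqrt (kinGauge z) ≤ Real.sqrt 1 := Real.sqrt_le_sqrt hg1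
        _ = 1 := Real.sqrt_one
      nlinarith [Real.mul_self_sqrt hg0]
    have hb1 : Real.sqrt |z.2.2 (Fin.last d)| ≤ Real.sqrt (kinGauge z) :=
      Real.sqrt_le_sqrt (le_trans (aux_abs_le_norm _ _) hgv)
    have hxle3 : ‖z.2.1‖ ≤ kinGauge z ^ 3 := by
      have h := pow_le_pow_left₀ (Real.rpow_nonneg (norm_nonneg _) _) hgx 3
      rwa [show (‖z.2.1‖ ^ ((1:ℝ)/3)) ^ (3:ℕ) = ‖z.2.1‖ by
        rw [← Real.rpow_natCast (‖z.2.1‖ ^ ((1:ℝ)/3)) 3,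
          ← Real.rpow_mul (norm_nonneg _)]; norm_num] at h
    have hta : |z.1| ≤ kinGauge z ^ 2 := by
      have h := pow_le_pow_left₀ (Real.rpow_nonneg (abs_nonneg _) _) hgt 2
      rwa [show (|z.1| ^ ((1:ℝ)/2)) ^ (2:ℕ) = |z.1| by
        rw [← Real.rpow_natCast (|z.1| ^ ((1:ℝ)/2)) 2,
          ← Real.rpow_mul (abs_nonneg _)]; norm_num] at h
    have hxd6 : (-z.2.1 (Fin.last d)) ^ ((1:ℝ)/6) ≤ Real.sqrt (kinGauge z) := by
      have h1 : -z.2.1 (Fin.last d) ≤ kinGauge z ^ 3 :=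
        le_trans (le_trans (neg_le_abs _) (aux_abs_le_norm _ _)) hxle3
      have h2 : (-z.2.1 (Fin.last d)) ^ ((1:ℝ)/6) ≤ (kinGauge z ^ 3) ^ ((1:ℝ)/6) :=
        Real.rpow_le_rpow (by linarith) h1 (by norm_num)
      rwa [aux_cube_sixth hg0] at h2
    have hg2 : kinGauge z ^ 2 ≤ kinGauge z := by nlinarith
    have hψ := psi_up z.2.1 z.2.2 hx1 hv1 hxdle
    have hψ2 : ψ z.2.1 z.2.2 ≤ c₂ * Real.sqrt (kinGauge z) :=
      le_trans hψ (mul_le_mul_of_nonneg_left (max_le hb1 hxd6) hc2.le)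
    have hvda : |z.2.2 (Fin.last d)| ≤ kinGauge z :=
      le_trans (aux_abs_le_norm _ _) hgv
    have hgoal : ψ z.2.1 z.2.2 - 2 * z.2.2 (Fin.last d) - (z.2.2 (Fin.last d)) ^ 2 - z.1
        ≤ (c₂ + 3) * Real.sqrt (kinGauge z) := by
      have h1 : -z.2.2 (Fin.last d) ≤ |z.2.2 (Fin.last d)| := neg_le_abs _
      have h2 : -z.1 ≤ |z.1| := neg_le_abs _
      nlinarith [sq_nonneg (z.2.2 (Fin.last d))]
    rwa [Real.sqrt_eq_rpow] at hgoal
  · -- (c)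
    intro z hz hx0 hv0
    obtain ⟨ht1, ht2, hxn, hvn, hxdle⟩ := aux_closure hz
    rw [hbd z.2.1 z.2.2 hx0 hv0]
    have hvda : |z.2.2 (Fin.last d)| ≤ r₀ := le_trans (aux_abs_le_norm _ _) hvn
    have hlo : -r₀ ≤ z.2.2 (Fin.last d) := (abs_le.mp hvda).1
    nlinarith [mul_nonneg (neg_nonneg.mpr hv0)
      (by linarith : (0:ℝ) ≤ 2 + z.2.2 (Fin.last d))]
  · -- (d)
    intro z hz hcase
    obtain ⟨ht1, ht2, hxn, hvn, hxdle⟩ := aux_closure hz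
    have hx1 : ‖z.2.1‖ < 1 := lt_of_le_of_lt hxn (by nlinarith)
    have hv1 : ‖z.2.2‖ < 1 := lt_of_le_of_lt hvn (by linarith)
    have hvda : |z.2.2 (Fin.last d)| ≤ r₀ := le_trans (aux_abs_le_norm _ _) hvn
    have hvle : z.2.2 (Fin.last d) ≤ r₀ := (abs_le.mp hvda).2
    have hvge : -r₀ ≤ z.2.2 (Fin.last d) := (abs_le.mp hvda).1
    have hvsq : (z.2.2 (Fin.last d))^2 ≤ r₀^2 := by
      rw [← sq_abs]; exact pow_le_pow_left₀ (abs_nonneg _) hvda 2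
    have hminl : min (r₀^2) ((c₁ * cstar / 2) * Real.sqrt r₀) ≤ r₀^2 := min_le_left _ _
    have hminr : min (r₀^2) ((c₁ * cstar / 2) * Real.sqrt r₀)
        ≤ (c₁ * cstar / 2) * Real.sqrt r₀ := min_le_right _ _
    rcases hcase with ht | hxdeq | hvabs
    · -- t = -r₀²
      rcases le_or_gt (z.2.2 (Fin.last d)) 0 with hv0 | hv0
      · have hψ : 0 ≤ ψ z.2.1 z.2.2 := hpos _ _
        rw [ht]
        nlinarith [mul_nonneg (neg_nonneg.mpr hv0)
          (by linarith : (0:ℝ) ≤ 2 + z.2.2 (Fin.last d))]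
      · have hψ := psi_low z.2.1 z.2.2 hx1 hv1 hxdle hv0
        have hs0 : 0 ≤ Real.sqrt (z.2.2 (Fin.last d)) := Real.sqrt_nonneg _
        have hseq : z.2.2 (Fin.last d)
            = Real.sqrt (z.2.2 (Fin.last d)) * Real.sqrt (z.2.2 (Fin.last d)) :=
          (Real.mul_self_sqrt hv0.le).symm
        have hsle : Real.sqrt (z.2.2 (Fin.last d)) ≤ Real.sqrt r₀ :=
          Real.sqrt_le_sqrt hvle
        have hs6 : Real.sqrt (z.2.2 (Fin.last d)) ≤ c₁ * cstar / 6 := hsle.trans hsr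
        have hs1 : Real.sqrt (z.2.2 (Fin.last d)) ≤ 1 := by nlinarith
        have hkey : 0 ≤ ψ z.2.1 z.2.2 - 2 * z.2.2 (Fin.last d)
            - (z.2.2 (Fin.last d))^2 := by nlinarith
        rw [ht]; linarith
    · -- x_d = -r₀³
      have hcube : (cstar * |z.2.2 (Fin.last d)|)^3 ≤ -z.2.1 (Fin.last d) := by
        rw [hxdeq, neg_neg]
        have h1 : cstar * |z.2.2 (Fin.last d)| ≤ r₀ := by nlinarith [abs_nonneg (z.2.2 (Fin.last d))]
        calc (cstar * |z.2.2 (Fin.last d)|)^3 ≤ r₀^3 :=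
          pow_le_pow_left₀ (by positivity) h1 3
        _ = r₀^3 := rfl
      have hψ := (hR0 z.2.1 z.2.2 hx1 hv1 hxdle hcube).1
      rw [hxdeq, neg_neg, aux_cube_sixth hr₀pos.le] at hψ
      have hr2 : r₀^2 ≤ r₀ := by nlinarith
      nlinarith
    · -- |v_d| = r₀
      rcases (abs_eq hr₀pos.le).mp hvabs with hveq | hveq
      · -- v_d = r₀
        have hψ := psi_low z.2.1 z.2.2 hx1 hv1 hxdle (by rw [hveq]; exact hr₀pos)
        rw [hveq] at hψ ⊢
        have hr2 : r₀^2 ≤ r₀ := by nlinarith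
        nlinarith
      · -- v_d = -r₀
        have hψ : 0 ≤ ψ z.2.1 z.2.2 := hpos _ _
        rw [hveq]
        have hr2 : r₀^2 ≤ r₀ := by nlinarith
        nlinarith


end
end
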